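/- arXiv:1606.02802 — 3 statements merged into one kernel-verified Lean document; each statement's English description precedes it below -/
import Mathlib

section
/- Let (x(n)) be an eventually positive solution of (E_A). Set α_i = liminf_{n→∞} Σ_{j=n+1}^{ρ_i(n)} p_i(j) and α = min_{1≤i≤m} α_i. If 0 < α ≤ −1 + √2, then liminf_{n→∞} x(n−1)/x(ρ(n)) ≥ (1 − α − √(1 − 2α − α²))/2. -/
/-!
Fix one component `i` and write `R = ρ_i`, `P = p_i`. Since `x` is eventually increasing and
`R(n) ≤ σ_i(n)`, the equation gives `∇x(n) ≥ P(n) x(R(n))`. Put `d = liminf x(n-1)/x(R(n))`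
and let `μ < α`, `c < d`. Summing `∇x` over the last block `(a, n-1]` of indices `j` with
`R(j) ≥ n`, and bounding each `x(R(j))` from below by summing `∇x` forward from `n-1`, gives
`c x(n-1) + μ x(n-1) + (μ²/2) x(R(n)) ≤ x(n-1)`, i.e. `μ²/2 ≤ (1 - c - μ) d`. Letting `c → d`
and `μ → α` shows that `d` lies between the roots of `d² - (1 - α) d + α²/2`. Since `ρ ≤ ρ_i`,
the same lower bound holds with `ρ` in place of `ρ_i`.
-/

/-- `ρ_i(n) = min_{s ≥ n} σ_i(s)`. -/
noncomputable def rhoi {m : ℕ} (σ : Fin m → ℕ → ℕ) (i : Fin m) (n : ℕ) : ℕ :=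
  sInf (σ i '' Set.Ici n)

/-- `ρ(n) = min_{1 ≤ i ≤ m} ρ_i(n)`. -/
noncomputable def rho {m : ℕ} [NeZero m] (σ : Fin m → ℕ → ℕ) (n : ℕ) : ℕ :=
  Finset.univ.inf' Finset.univ_nonempty (fun i => rhoi σ i n)

open Finset Filter

theorem add_sum_Ioc_le_of_forall_le {y g : ℕ → ℝ} {a b : ℕ} (hab : a ≤ b)
    (h : ∀ j ∈ Ioc a b, y (j - 1) + g j ≤ y j) : y a + ∑ j ∈ Ioc a b, g j ≤ y b := by
  induction b, hab using Nat.le_induction with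
  | base => simp
  | succ b hab ih =>
    have hlast := h (b + 1) (mem_Ioc.2 ⟨by omega, le_rfl⟩)
    have hinit := ih fun j hj => h j (Ioc_subset_Ioc_right b.le_succ hj)
    rw [sum_Ioc_succ_top hab]
    simp only [Nat.add_sub_cancel] at hlast
    linarith

theorem sq_max_zero_le (t : ℝ) {q : ℝ} (hq : 0 ≤ q) :
    max t 0 ^ 2 ≤ max (t - q) 0 ^ 2 + 2 * q * max t 0 := by
  rcases le_total t 0 with ht | ht <;> rcases le_total (t - q) 0 with htq | htq <;>
    simp only [max_eq_left, max_eq_right, ht, htq] <;> nlinarith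

/-- The right side is a lower Riemann sum of `∫₀^∞ max (μ - t) 0 dt = μ²/2`, taken at the tail
sums of `P`. -/
theorem sq_div_two_le_sum_mul_max {P : ℕ → ℝ} (hP : ∀ j, 0 ≤ P j) {μ : ℝ} (hμ : 0 ≤ μ)
    {a b : ℕ} (hab : a ≤ b) (hsum : μ ≤ ∑ j ∈ Ioc a b, P j) :
    μ ^ 2 / 2 ≤ ∑ j ∈ Ioc a b, P j * max (μ - ∑ k ∈ Ioc j b, P k) 0 := by
  set T : ℕ → ℝ := fun j => ∑ k ∈ Ioc j b, P k with hT
  have htail : ∀ j ∈ Ioc a b, T (j - 1) = P j + T j := by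
    intro j hj
    obtain ⟨k, rfl⟩ : ∃ k, j = k + 1 := ⟨j - 1, by simp at hj; omega⟩
    simp only [hT, Nat.add_sub_cancel]
    rw [← sum_Ioc_consecutive P k.le_succ (by simp at hj; omega), Nat.Ioc_succ_singleton,
      sum_singleton]
  have hTel := add_sum_Ioc_le_of_forall_le (y := fun j => -(max (μ - T j) 0 ^ 2 / 2))
    (g := fun j => -(P j * max (μ - T j) 0)) hab fun j hj => by
      have := sq_max_zero_le (μ - T j) (hP j)
      simp only [htail j hj, sub_add_eq_sub_sub_swap]
      linarith
  simp only [hT, Ioc_self, sum_empty, sub_zero, max_eq_left hμ, sum_neg_distrib,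
    max_eq_right (sub_nonpos.2 hsum)] at hTel
  linarith

theorem sub_sum_Ioc_le_sum_Ioc_min {P : ℕ → ℝ} (hP : ∀ j, 0 ≤ P j) {μ : ℝ} {j b c d : ℕ}
    (hjb : j ≤ b) (hbc : b < c) (hc : μ ≤ ∑ k ∈ Ioc j c, P k)
    (hd : μ ≤ ∑ k ∈ Ioc (b + 1) d, P k) :
    μ - ∑ k ∈ Ioc j b, P k ≤ ∑ k ∈ Ioc b (min c d), P k := by
  rcases le_total c d with hcd | hdc
  · rw [min_eq_left hcd]
    rw [← sum_Ioc_consecutive P hjb hbc.le] at hc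
    linarith
  · have hsub : ∑ k ∈ Ioc (b + 1) d, P k ≤ ∑ k ∈ Ioc b d, P k :=
      sum_le_sum_of_subset_of_nonneg (Ioc_subset_Ioc_left b.le_succ) fun k _ _ => hP k
    have : 0 ≤ ∑ k ∈ Ioc j b, P k := sum_nonneg fun k _ => hP k
    rw [min_eq_right hdc]
    linarith

theorem div_mem_Ioc_of_monotoneOn {x : ℕ → ℝ} {N n k : ℕ} (hpos : ∀ n, N ≤ n → 0 < x n)
    (hx : MonotoneOn x (Set.Ici N)) (hn : N < n) (hnk : n ≤ k) :
    x (n - 1) / x k ∈ Set.Ioc 0 1 :=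
  ⟨div_pos (hpos _ (by omega)) (hpos _ (by omega)),
    div_le_one_of_le₀ (hx (by simp; omega) (by simp; omega) (by omega)) (hpos _ (by omega)).le⟩

theorem liminf_div_le_liminf_div {x : ℕ → ℝ} {N : ℕ} {f g : ℕ → ℕ}
    (hpos : ∀ n, N ≤ n → 0 < x n) (hx : MonotoneOn x (Set.Ici N))
    (hfg : ∀ᶠ n in atTop, n ≤ f n ∧ f n ≤ g n) :
    liminf (fun n => x (n - 1) / x (g n)) atTop ≤ liminf (fun n => x (n - 1) / x (f n)) atTop := by
  have hev := hfg.and (eventually_gt_atTop N)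
  have hf := hev.mono fun n hn => div_mem_Ioc_of_monotoneOn hpos hx hn.2 hn.1.1
  have hg := hev.mono fun n hn => div_mem_Ioc_of_monotoneOn hpos hx hn.2 (hn.1.1.trans hn.1.2)
  refine liminf_le_liminf (hev.mono fun n hn => ?_)
    (isBoundedUnder_of_eventually_ge (hg.mono fun _ h => h.1.le))
    (isBoundedUnder_of_eventually_le (hf.mono fun _ h => h.2)).isCoboundedUnder_ge
  exact div_le_div_of_nonneg_left (hpos _ (by omega)).le (hpos _ (by omega))
    (hx (by simp; omega) (by simp; omega) hn.1.2)

theorem le_mul_liminf {u : ℕ → ℝ} {a k : ℝ} (ha : 0 < a) (h0 : ∀ᶠ n in atTop, 0 ≤ u n)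
    (hbdd : IsBoundedUnder (· ≤ ·) atTop u) (h : ∀ᶠ n in atTop, a ≤ k * u n) :
    a ≤ k * liminf u atTop := by
  obtain ⟨n, hn0, hn⟩ := (h0.and h).exists
  have hk : 0 < k := by
    by_contra hk
    nlinarith
  rw [← div_le_iff₀' hk]
  exact le_liminf_of_le hbdd.isCoboundedUnder_ge (h.mono fun n hn => (div_le_iff₀' hk).2 hn)

theorem sq_div_two_le_mul_liminf {u : ℕ → ℝ} {α : ℝ} (hα : 0 < α)
    (h0 : ∀ᶠ n in atTop, 0 ≤ u n) (hbdd : IsBoundedUnder (· ≤ ·) atTop u)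
    (hrec : ∀ μ ∈ Set.Ioo 0 α, ∀ c, 0 ≤ c → (∀ᶠ n in atTop, c ≤ u n) →
      ∀ᶠ n in atTop, μ ^ 2 / 2 ≤ (1 - c - μ) * u n) :
    α ^ 2 / 2 ≤ (1 - liminf u atTop - α) * liminf u atTop := by
  set d := liminf u atTop
  have hd : 0 < d := by
    have hd0 : 0 ≤ d := le_liminf_of_le hbdd.isCoboundedUnder_ge h0
    have := le_mul_liminf (by positivity) h0 hbdd
      (hrec (α / 2) ⟨by linarith, by linarith⟩ 0 le_rfl h0)
    change _ ≤ _ * d at this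
    refine hd0.lt_of_ne fun hd => ?_
    rw [← hd, mul_zero] at this
    linarith [show 0 < (α / 2) ^ 2 / 2 by positivity]
  have hμ : ∀ μ ∈ Set.Ioo 0 α, μ ^ 2 / 2 ≤ (1 - d - μ) * d := by
    intro μ hμ
    refine ContinuousWithinAt.closure_le (f := fun _ => μ ^ 2 / 2) (g := fun c => (1 - c - μ) * d)
      (s := Set.Ioo 0 d) (by simp [closure_Ioo hd.ne, hd.le]) continuousWithinAt_const
      (by fun_prop) fun c hc => le_mul_liminf (by positivity [hμ.1]) h0 hbdd
        (hrec μ hμ c hc.1.le ((eventually_lt_of_lt_liminf hc.2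
          (isBoundedUnder_of_eventually_ge h0)).mono fun _ => le_of_lt))
  exact ContinuousWithinAt.closure_le (f := fun μ => μ ^ 2 / 2) (g := fun μ => (1 - d - μ) * d)
    (s := Set.Ioo 0 α) (by simp [closure_Ioo hα.ne, hα.le]) (by fun_prop) (by fun_prop) hμ

theorem le_of_sq_div_two_le_mul {α d : ℝ} (h : α ^ 2 / 2 ≤ (1 - d - α) * d) :
    (1 - α - √(1 - 2 * α - α ^ 2)) / 2 ≤ d := by
  have : |1 - α - 2 * d| ≤ √(1 - 2 * α - α ^ 2) := Real.abs_le_sqrt (by nlinarith)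
  linarith [le_abs_self (1 - α - 2 * d)]

structure IsPosSupersolution (P x : ℕ → ℝ) (R : ℕ → ℕ) (N : ℕ) : Prop where
  lt_adv : ∀ n, N ≤ n → n < R n
  pos : ∀ n, N ≤ n → 0 < x n
  step : ∀ n, N < n → x (n - 1) + P n * x (R n) ≤ x n

namespace IsPosSupersolution

variable {P x : ℕ → ℝ} {R : ℕ → ℕ} {N : ℕ}

theorem of_le (h : IsPosSupersolution P x R N) {M : ℕ} (hNM : N ≤ M) :
    IsPosSupersolution P x R M :=
  ⟨fun n hn => h.lt_adv n (hNM.trans hn), fun n hn => h.pos n (hNM.trans hn),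
    fun n hn => h.step n (hNM.trans_lt hn)⟩

theorem monotoneOn (h : IsPosSupersolution P x R N) (hP : ∀ n, 0 ≤ P n) :
    MonotoneOn x (Set.Ici N) := by
  refine monotoneOn_nat_Ici_of_le_succ fun n hn => ?_
  have hstep := h.step (n + 1) (by omega)
  have hR := h.lt_adv (n + 1) (by omega)
  have := mul_nonneg (hP (n + 1)) (h.pos (R (n + 1)) (by omega)).le
  simp only [Nat.add_sub_cancel] at hstep
  linarith

theorem add_sum_mul_le (h : IsPosSupersolution P x R N) (hP : ∀ n, 0 ≤ P n) (hR : Monotone R)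
    {b v : ℕ} (hb : N ≤ b) (hbv : b ≤ v) :
    x b + (∑ j ∈ Ioc b v, P j) * x (R (b + 1)) ≤ x v := by
  rw [sum_mul]
  refine add_sum_Ioc_le_of_forall_le hbv fun j hj => (h.step j (by simp at hj; omega)).trans' ?_
  simp only [mem_Ioc] at hj
  have hRb : N ≤ R (b + 1) := by have := h.lt_adv (b + 1) (by omega); omega
  gcongr
  · exact hP j
  · exact h.monotoneOn hP hRb (hRb.trans (hR (by omega))) (hR (by omega))

theorem key_estimate (h : IsPosSupersolution P x R N) (hP : ∀ n, 0 ≤ P n) (hR : Monotone R)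
    {μ c : ℝ} (hμ : 0 ≤ μ) (hc : 0 ≤ c) (hwin : ∀ s, N ≤ s → μ ≤ ∑ j ∈ Ioc s (R s), P j)
    (hcx : ∀ s, N < s → c * x (R s) ≤ x (s - 1)) {b : ℕ} (hb : R N ≤ b) :
    μ ^ 2 / 2 * x (R (b + 1)) ≤ (1 - c - μ) * x b := by
  have hNb : N < b := (h.lt_adv N le_rfl).trans_le hb
  set a := Nat.findGreatest (fun s => R s ≤ b) b
  have hNa : N ≤ a := Nat.le_findGreatest hNb.le hb
  have hRa : R a ≤ b := Nat.findGreatest_spec (P := fun s => R s ≤ b) hNb.le hb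
  have hab : a < b := (h.lt_adv a hNa).trans_le hRa
  have hRa1 : b < R (a + 1) := lt_of_not_ge
    (Nat.findGreatest_is_greatest (P := fun s => R s ≤ b) (k := a + 1) (by omega) hab)
  set r := R (b + 1)
  have hbr : b + 1 < r := h.lt_adv (b + 1) (by omega)
  have hmono := h.monotoneOn hP
  set M : ℕ → ℝ := fun j => max (μ - ∑ k ∈ Ioc j b, P k) 0
  have hforward : ∀ j ∈ Ioc a b, x b + M j * x r ≤ x (R j) := by
    intro j hj
    simp only [mem_Ioc] at hj
    have hRj : b < R j := hRa1.trans_le (hR hj.1)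
    have hv := h.add_sum_mul_le hP hR hNb.le (v := min (R j) r) (le_min hRj.le (by omega))
    have hM : M j ≤ ∑ k ∈ Ioc b (min (R j) r), P k :=
      max_le (sub_sum_Ioc_le_sum_Ioc_min hP hj.2 hRj (hwin j (by omega))
        (hwin (b + 1) (by omega))) (sum_nonneg fun k _ => hP k)
    have := mul_le_mul_of_nonneg_right hM (h.pos r (by omega)).le
    have := hmono (by simp; omega) (by simp; omega) (min_le_left (R j) r)
    linarith
  have hback := add_sum_Ioc_le_of_forall_le (y := x) (g := fun j => P j * x (R j)) hab.le
    fun j hj => h.step j (by simp at hj; omega)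
  have hsplit : ∑ j ∈ Ioc a b, P j * (x b + M j * x r)
      = (∑ j ∈ Ioc a b, P j) * x b + (∑ j ∈ Ioc a b, P j * M j) * x r := by
    rw [sum_mul, sum_mul, ← sum_add_distrib]
    exact sum_congr rfl fun j _ => by ring
  have hblock : μ ≤ ∑ j ∈ Ioc a b, P j := (hwin a hNa).trans
    (sum_le_sum_of_subset_of_nonneg (Ioc_subset_Ioc_right hRa) fun k _ _ => hP k)
  have harea := sq_div_two_le_sum_mul_max hP hμ hab.le hblock
  have hca : c * x b ≤ x a := (hcx (a + 1) (by omega)).trans' <|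
    mul_le_mul_of_nonneg_left (hmono (by simp; omega) (by simp; omega) hRa1.le) hc
  have hxb := (h.pos b hNb.le).le
  have hxr := (h.pos r (by omega)).le
  have := sum_le_sum fun j hj => mul_le_mul_of_nonneg_left (hforward j hj) (hP j)
  linarith [mul_le_mul_of_nonneg_right hblock hxb, mul_le_mul_of_nonneg_right harea hxr]

theorem eventually_sq_div_two_le_mul_div (h : IsPosSupersolution P x R N) (hP : ∀ n, 0 ≤ P n)
    (hR : Monotone R) {μ c : ℝ} (hμ : 0 ≤ μ) (hc : 0 ≤ c)
    (hwin : ∀ᶠ s in atTop, μ ≤ ∑ j ∈ Ioc s (R s), P j)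
    (hcx : ∀ᶠ s in atTop, c ≤ x (s - 1) / x (R s)) :
    ∀ᶠ n in atTop, μ ^ 2 / 2 ≤ (1 - c - μ) * (x (n - 1) / x (R n)) := by
  obtain ⟨M, hM⟩ := eventually_atTop.1 (hwin.and hcx)
  have h' := h.of_le (le_max_left N M)
  have hxR : ∀ s, max N M ≤ s → 0 < x (R s) := fun s hs =>
    h'.pos _ (hs.trans (h'.lt_adv s hs).le)
  refine eventually_atTop.2 ⟨R (max N M) + 1, fun n hn => ?_⟩
  have := h'.lt_adv (max N M) le_rfl
  obtain ⟨b, rfl⟩ : ∃ b, n = b + 1 := ⟨n - 1, by omega⟩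
  have := h'.key_estimate hP hR hμ hc (fun s hs => (hM s (by omega)).1)
    (fun s hs => (le_div_iff₀ (hxR s hs.le)).1 (hM s (by omega)).2) (b := b) (by omega)
  rw [Nat.add_sub_cancel, ← mul_div_assoc, le_div_iff₀ (hxR _ (by omega))]
  exact this

theorem le_liminf_div (h : IsPosSupersolution P x R N) (hP : ∀ n, 0 ≤ P n) (hR : Monotone R)
    {α : ℝ} (hα0 : 0 < α) (hα : α ≤ liminf (fun n => ∑ j ∈ Ioc n (R n), P j) atTop) :
    (1 - α - √(1 - 2 * α - α ^ 2)) / 2 ≤ liminf (fun n => x (n - 1) / x (R n)) atTop := by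
  have hU := (eventually_gt_atTop N).mono fun n hn =>
    div_mem_Ioc_of_monotoneOn h.pos (h.monotoneOn hP) hn (h.lt_adv n hn.le).le
  refine le_of_sq_div_two_le_mul <| sq_div_two_le_mul_liminf hα0 (hU.mono fun _ h => h.1.le)
    (isBoundedUnder_of_eventually_le (hU.mono fun _ h => h.2)) fun μ hμ c hc hcx => ?_
  refine h.eventually_sq_div_two_le_mul_div hP hR hμ.1.le hc ?_ hcx
  exact (eventually_lt_of_lt_liminf (hμ.2.trans_le hα) (isBoundedUnder_of_eventually_ge
    (Eventually.of_forall fun n => sum_nonneg fun j _ => hP j))).mono fun _ => le_of_lt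

end IsPosSupersolution

section Solution

variable {m : ℕ} {σ : Fin m → ℕ → ℕ}

theorem rhoi_le (i : Fin m) {s n : ℕ} (h : s ≤ n) : rhoi σ i s ≤ σ i n :=
  Nat.sInf_le ⟨n, h, rfl⟩

theorem exists_eq_rhoi (i : Fin m) (s : ℕ) : ∃ n, s ≤ n ∧ σ i n = rhoi σ i s :=
  Nat.sInf_mem (Set.image_nonempty.2 Set.nonempty_Ici)

theorem rhoi_monotone (i : Fin m) : Monotone (rhoi σ i) := fun a b hab => by
  obtain ⟨n, hbn, hn⟩ := exists_eq_rhoi (σ := σ) i b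
  exact hn ▸ rhoi_le i (hab.trans hbn)

theorem lt_rhoi (hσ : ∀ i : Fin m, ∀ n : ℕ, 1 ≤ n → n + 1 ≤ σ i n) (i : Fin m) {s : ℕ}
    (hs : 1 ≤ s) : s < rhoi σ i s := by
  obtain ⟨n, hsn, hn⟩ := exists_eq_rhoi (σ := σ) i s
  have := hσ i n (by omega)
  omega

theorem rho_le_rhoi [NeZero m] (i : Fin m) (n : ℕ) : rho σ n ≤ rhoi σ i n :=
  inf'_le _ (mem_univ i)

theorem lt_rho [NeZero m] (hσ : ∀ i : Fin m, ∀ n : ℕ, 1 ≤ n → n + 1 ≤ σ i n) {n : ℕ}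
    (hn : 1 ≤ n) : n < rho σ n :=
  (lt_inf'_iff _).2 fun i _ => lt_rhoi hσ i hn

variable {p : Fin m → ℕ → ℝ} {x : ℕ → ℝ} {N : ℕ}

theorem monotoneOn_of_solution (hp : ∀ i : Fin m, ∀ n : ℕ, 0 ≤ p i n)
    (hσ : ∀ i : Fin m, ∀ n : ℕ, 1 ≤ n → n + 1 ≤ σ i n)
    (hxeq : ∀ n : ℕ, 1 ≤ n → x n - x (n - 1) - ∑ i : Fin m, p i n * x (σ i n) = 0)
    (hpos : ∀ n, N ≤ n → 0 < x n) : MonotoneOn x (Set.Ici N) := by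
  refine monotoneOn_nat_Ici_of_le_succ fun n hn => ?_
  have heq := hxeq (n + 1) (by omega)
  have : 0 ≤ ∑ i : Fin m, p i (n + 1) * x (σ i (n + 1)) := sum_nonneg fun i _ =>
    mul_nonneg (hp i _) (hpos _ (by have := hσ i (n + 1) (by omega); omega)).le
  simp only [Nat.add_sub_cancel] at heq
  linarith

theorem isPosSupersolution_of_solution (hp : ∀ i : Fin m, ∀ n : ℕ, 0 ≤ p i n)
    (hσ : ∀ i : Fin m, ∀ n : ℕ, 1 ≤ n → n + 1 ≤ σ i n)
    (hxeq : ∀ n : ℕ, 1 ≤ n → x n - x (n - 1) - ∑ i : Fin m, p i n * x (σ i n) = 0)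
    (hpos : ∀ n, N ≤ n → 0 < x n) (i : Fin m) :
    IsPosSupersolution (p i) x (rhoi σ i) (N + 1) where
  lt_adv n hn := lt_rhoi hσ i (by omega)
  pos n hn := hpos n (by omega)
  step n hn := by
    have hmono := monotoneOn_of_solution hp hσ hxeq hpos
    have hR := lt_rhoi hσ i (s := n) (by omega)
    have hRσ := rhoi_le (σ := σ) i (le_refl n)
    have hi : p i n * x (rhoi σ i n) ≤ p i n * x (σ i n) :=
      mul_le_mul_of_nonneg_left (hmono (by simp; omega) (by simp; omega) hRσ) (hp i n)
    have hsingle : p i n * x (σ i n) ≤ ∑ l : Fin m, p l n * x (σ l n) :=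
      single_le_sum (f := fun l => p l n * x (σ l n)) (fun l _ => mul_nonneg (hp l n)
        (hpos _ (by have := hσ l n (by omega); omega)).le) (mem_univ i)
    linarith [hxeq n (by omega)]

end Solution

theorem stmt_7_general {m : ℕ} [NeZero m] (p : Fin m → ℕ → ℝ) (σ : Fin m → ℕ → ℕ)
    (hp : ∀ i : Fin m, ∀ n : ℕ, 0 ≤ p i n)
    (hσ : ∀ i : Fin m, ∀ n : ℕ, 1 ≤ n → n + 1 ≤ σ i n)
    (x : ℕ → ℝ)
    (hxeq : ∀ n : ℕ, 1 ≤ n → x n - x (n - 1) - ∑ i : Fin m, p i n * x (σ i n) = 0)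
    (hxpos : ∃ N : ℕ, ∀ n ≥ N, 0 < x n)
    (α : ℝ)
    (hα : α = Finset.univ.inf' Finset.univ_nonempty (fun i : Fin m =>
        Filter.liminf (fun n : ℕ => ∑ j ∈ Finset.Icc (n + 1) (rhoi σ i n), p i j) Filter.atTop))
    (hα0 : 0 < α) :
    (1 - α - Real.sqrt (1 - 2 * α - α ^ 2)) / 2 ≤
      Filter.liminf (fun n : ℕ => x (n - 1) / x (rho σ n)) Filter.atTop := by
  obtain ⟨N, hpos⟩ := hxpos
  have hsol := isPosSupersolution_of_solution hp hσ hxeq hpos 0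
  have hαi : α ≤ liminf (fun n => ∑ j ∈ Ioc n (rhoi σ 0 n), p 0 j) atTop := by
    simpa only [hα, Icc_add_one_left_eq_Ioc] using inf'_le _ (mem_univ 0)
  refine (hsol.le_liminf_div (hp 0) (rhoi_monotone 0) hα0 hαi).trans ?_
  exact liminf_div_le_liminf_div hpos (monotoneOn_of_solution hp hσ hxeq hpos)
    (eventually_atTop.2 ⟨1, fun n hn => ⟨(lt_rho hσ hn).le, rho_le_rhoi 0 n⟩⟩)

/-- Lemma 2.2′: if `x` is an eventually positive solution of the advanced equation,
`α_i = liminf_{n→∞} ∑_{j=n+1}^{ρ_i(n)} p_i(j)`, `α = min_i α_i` and `0 < α ≤ -1 + √2`,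
then `liminf_{n→∞} x(n-1)/x(ρ(n)) ≥ (1 - α - √(1 - 2α - α²))/2`. -/
theorem stmt_7 {m : ℕ} [NeZero m] (p : Fin m → ℕ → ℝ) (σ : Fin m → ℕ → ℕ)
    (hp : ∀ i : Fin m, ∀ n : ℕ, 0 ≤ p i n)
    (hσ : ∀ i : Fin m, ∀ n : ℕ, 1 ≤ n → n + 1 ≤ σ i n)
    (x : ℕ → ℝ)
    (hxeq : ∀ n : ℕ, 1 ≤ n → x n - x (n - 1) - ∑ i : Fin m, p i n * x (σ i n) = 0)
    (hxpos : ∃ N : ℕ, ∀ n ≥ N, 0 < x n)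
    (α : ℝ)
    (hα : α = Finset.univ.inf' Finset.univ_nonempty (fun i : Fin m =>
        Filter.liminf (fun n : ℕ => ∑ j ∈ Finset.Icc (n + 1) (rhoi σ i n), p i j) Filter.atTop))
    (hα0 : 0 < α) (hα1 : α ≤ -1 + Real.sqrt 2) :
    (1 - α - Real.sqrt (1 - 2 * α - α ^ 2)) / 2 ≤
      Filter.liminf (fun n : ℕ => x (n - 1) / x (rho σ n)) Filter.atTop :=
  stmt_7_general p σ hp hσ x hxeq hxpos α hα hα0
end

section
/- Assume lim_{n→∞} τ_i(n) = ∞ for each 1 ≤ i ≤ m and that for each k = 1, …, m, liminf_{n→∞} Σ_{i=1}^m Σ_{j=τ_k(n)}^{n−1} p_i(j) > 1/e. Then every solution of (E_R) oscillates. -/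
/-!
Put `P = ∑ i, p i` and `T n = max_i τ_i(n)`. An eventually positive solution is eventually
nonincreasing, hence satisfies `x(n+1) ≤ x(n) - P(n) x(T(n))`, while `∑_{j ∈ [T n, n)} P j ≥ c > 1/e`
eventually. If `λ x(n) ≤ x(T n)` eventually, then `x(j+1) ≤ x(j) (1 - λ P j) ≤ x(j) e^{-λ P j}`, and
summing over `[T n, n)` gives `e^{cλ} x(n) ≤ x(T n)`; since `e^{cλ} ≥ ecλ` and `ec > 1`, iterating
makes `λ` arbitrarily large. But if `u ≥ n` is where `∑_{[n, u]} P` first reaches `c/2` and `s`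
maximizes `T` on `[n, u]`, then `[T s, n)` also carries `c/2`, and telescoping over both intervals
gives `x(n) ≥ (c/2) x(T s) ≥ (c/2)² λ x(n)`, so `λ ≤ 4/c²`.
-/

open Filter Finset Real

theorem sum_Ico_sub_add_one {M : Type*} [AddCommGroup M] (x : ℤ → M) {a b : ℤ} (hab : a ≤ b) :
    ∑ j ∈ Ico a b, (x j - x (j + 1)) = x a - x b := by
  induction b, hab using Int.leInduction with
  | base => simp
  | succ b hab ih =>
    rw [← sum_Ico_add_eq_sum_Ico_add_one hab, ih]
    abel

theorem sum_mul_le_sub_of_le_sub {P w x : ℤ → ℝ} {y : ℝ} {a b : ℤ} (hab : a ≤ b)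
    (hP : ∀ j ∈ Ico a b, 0 ≤ P j) (hy : ∀ j ∈ Ico a b, y ≤ w j)
    (hx : ∀ j ∈ Ico a b, x (j + 1) ≤ x j - P j * w j) :
    (∑ j ∈ Ico a b, P j) * y ≤ x a - x b := by
  rw [← sum_Ico_sub_add_one x hab, sum_mul]
  refine sum_le_sum fun j hj => ?_
  nlinarith [mul_le_mul_of_nonneg_left (hy j hj) (hP j hj), hx j hj]

theorem le_mul_exp_neg_sum_Ico {x g : ℤ → ℝ} {a b : ℤ} (hab : a ≤ b)
    (h : ∀ j ∈ Ico a b, x (j + 1) ≤ x j * exp (-g j)) :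
    x b ≤ x a * exp (-∑ j ∈ Ico a b, g j) := by
  induction b, hab using Int.leInduction with
  | base => simp
  | succ b hab ih =>
    have hb := h b (by simp [hab])
    rw [← sum_Ico_add_eq_sum_Ico_add_one hab, neg_add, exp_add, ← mul_assoc]
    refine hb.trans (mul_le_mul_of_nonneg_right (ih fun j hj => h j ?_) (exp_pos _).le)
    exact Ico_subset_Ico_right (Int.le_add_one le_rfl) hj

theorem Int.exists_lt_le_add_one {α : Type*} [LinearOrder α] {f : ℤ → α} {a : α} {n s : ℤ}
    (hns : n ≤ s) (hn : f n < a) (hs : a ≤ f s) : ∃ u, n ≤ u ∧ f u < a ∧ a ≤ f (u + 1) := by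
  by_contra! H
  induction s, hns using Int.leInduction with
  | base => exact hs.not_gt hn
  | succ s hns ih => exact hs.not_gt (H s hns (not_le.1 ih))

theorem eventually_antitoneOn_Ici {α : Type*} [Preorder α] {x : ℤ → α}
    (h : ∀ᶠ n in atTop, x (n + 1) ≤ x n) : ∀ᶠ N in atTop, AntitoneOn x (Set.Ici N) := by
  obtain ⟨N₀, hN₀⟩ := eventually_atTop.1 h
  filter_upwards [eventually_ge_atTop N₀] with N hN
  exact antitoneOn_of_succ_le Set.ordConnected_Ici fun a _ ha _ => by
    simpa [Order.succ_eq_add_one] using hN₀ a (hN.trans ha)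

theorem eventually_lt_of_le_sum_Ico {P : ℤ → ℝ} {T : ℤ → ℤ} {c : ℝ} (hc : 0 < c)
    (hsum : ∀ᶠ n in atTop, c ≤ ∑ j ∈ Ico (T n) n, P j) : ∀ᶠ n in atTop, T n < n := by
  filter_upwards [hsum] with n hn
  by_contra! hle
  rw [Ico_eq_empty_of_le hle, sum_empty] at hn
  exact hn.not_gt hc

theorem exists_halves_of_le_sum_Ico {P : ℤ → ℝ} {T : ℤ → ℤ} {c : ℝ} {N n : ℤ} (hc : 0 < c)
    (hP : ∀ j ≥ N, 0 ≤ P j) (hsum : ∀ j ≥ N, c ≤ ∑ i ∈ Ico (T j) j, P i)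
    (hT : Tendsto T atTop atTop) (hn : N ≤ n) :
    ∃ u ≥ n, ∃ s ∈ Icc n u, (∀ j ∈ Icc n u, T j ≤ T s) ∧ T s ≤ n ∧
      c / 2 ≤ ∑ j ∈ Ico n (u + 1), P j ∧ c / 2 ≤ ∑ j ∈ Ico (T s) n, P j := by
  have sum_le_sum_Ico {a b a' b' : ℤ} (ha : a' ≤ a) (hb : b ≤ b')
      (hN : ∀ j, a' ≤ j → j < b' → ¬(a ≤ j ∧ j < b) → N ≤ j) :
      ∑ j ∈ Ico a b, P j ≤ ∑ j ∈ Ico a' b', P j :=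
    sum_le_sum_of_subset_of_nonneg (Ico_subset_Ico ha hb) fun j hj hj' => by
      rw [mem_Ico] at hj hj'
      exact hP j (hN j hj.1 hj.2 hj')
  obtain ⟨s₁, hTs₁, hs₁⟩ := ((hT.eventually_ge_atTop n).and (eventually_ge_atTop n)).exists
  obtain ⟨u, hnu, hu, hu₁⟩ := Int.exists_lt_le_add_one (f := fun s => ∑ j ∈ Ico n s, P j) hs₁
    (by simpa using half_pos hc)
    ((half_le_self hc.le).trans ((hsum s₁ (hn.trans hs₁)).trans (sum_le_sum_Ico hTs₁ le_rfl (by omega))))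
  obtain ⟨s, hs, hsmax⟩ := exists_max_image (Icc n u) T ⟨n, left_mem_Icc.2 hnu⟩
  have hsN : N ≤ s := hn.trans (mem_Icc.1 hs).1
  have hcs := hsum s hsN
  have hTs : T s ≤ n := by
    by_contra! hlt
    have := sum_le_sum_Ico hlt.le (mem_Icc.1 hs).2 (by omega)
    linarith
  refine ⟨u, hnu, s, hs, hsmax, hTs, hu₁, ?_⟩
  have hsplit : ∑ j ∈ Ico (T s) u, P j = ∑ j ∈ Ico (T s) n, P j + ∑ j ∈ Ico n u, P j := by
    rw [← sum_union (Ico_disjoint_Ico_consecutive _ _ _), Ico_union_Ico_eq_Ico hTs hnu]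
  have := sum_le_sum_Ico (le_refl (T s)) (mem_Icc.1 hs).2 (by omega)
  linarith

structure IsEventuallyPosSubsolution (P : ℤ → ℝ) (T : ℤ → ℤ) (x : ℤ → ℝ) : Prop where
  nonneg : ∀ᶠ n in atTop, 0 ≤ P n
  pos : ∀ᶠ n in atTop, 0 < x n
  tendsto : Tendsto T atTop atTop
  le : ∀ᶠ n in atTop, x (n + 1) ≤ x n - P n * x (T n)

namespace IsEventuallyPosSubsolution

variable {P : ℤ → ℝ} {T : ℤ → ℤ} {x : ℤ → ℝ} {c l : ℝ}

theorem pos_comp (h : IsEventuallyPosSubsolution P T x) : ∀ᶠ n in atTop, 0 < x (T n) :=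
  h.tendsto.eventually h.pos

theorem eventually_antitoneOn (h : IsEventuallyPosSubsolution P T x) :
    ∀ᶠ N in atTop, AntitoneOn x (Set.Ici N) :=
  eventually_antitoneOn_Ici <| by
    filter_upwards [h.nonneg, h.pos_comp, h.le] with n hP hx hle
    nlinarith

theorem exp_mul_le (h : IsEventuallyPosSubsolution P T x) (hc : 0 < c)
    (hsum : ∀ᶠ n in atTop, c ≤ ∑ j ∈ Ico (T n) n, P j) (hl : 0 ≤ l)
    (hlx : ∀ᶠ n in atTop, l * x n ≤ x (T n)) :
    ∀ᶠ n in atTop, exp (c * l) * x n ≤ x (T n) := by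
  have hstep : ∀ᶠ j in atTop, x (j + 1) ≤ x j * exp (-(l * P j)) := by
    filter_upwards [h.nonneg, h.pos, h.le, hlx] with j hP hx hle hlj
    calc x (j + 1) ≤ x j * (1 - l * P j) := by nlinarith [mul_le_mul_of_nonneg_left hlj hP]
      _ ≤ x j * exp (-(l * P j)) := by
        gcongr
        linarith [add_one_le_exp (-(l * P j))]
  obtain ⟨N, hN⟩ := eventually_atTop.1 hstep
  filter_upwards [h.tendsto.eventually_ge_atTop N, hsum, h.pos_comp,
    eventually_lt_of_le_sum_Ico hc hsum] with n hTn hcn hxT hlt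
  have hx := le_mul_exp_neg_sum_Ico hlt.le fun j hj => hN j (hTn.trans (mem_Ico.1 hj).1)
  rw [← mul_sum] at hx
  calc exp (c * l) * x n ≤ exp (c * l) * (x (T n) * exp (-(l * c))) := by
        gcongr
        exact hx.trans (by gcongr)
    _ = x (T n) := by rw [mul_left_comm, ← exp_add, mul_comm l, add_neg_cancel, exp_zero, mul_one]

theorem mul_half_sq_le_one (h : IsEventuallyPosSubsolution P T x) (hc : 0 < c)
    (hsum : ∀ᶠ n in atTop, c ≤ ∑ j ∈ Ico (T n) n, P j) (hl : 0 ≤ l)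
    (hlx : ∀ᶠ n in atTop, l * x n ≤ x (T n)) :
    l * (c / 2) ^ 2 ≤ 1 := by
  obtain ⟨N, hanti, hN⟩ := (h.eventually_antitoneOn.and (eventually_forall_ge_atTop.2
    (h.nonneg.and (h.pos.and (h.le.and (hsum.and hlx)))))).exists
  choose hP hx hle hsumN hlxN using hN
  obtain ⟨n, hNn, hTN⟩ := ((eventually_ge_atTop N).and
    (eventually_forall_ge_atTop.2 (h.tendsto.eventually_ge_atTop N))).exists
  obtain ⟨u, hnu, s, hs, hsmax, hTs, hcu, hcs⟩ :=
    exists_halves_of_le_sum_Ico hc hP hsumN h.tendsto hNn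
  rw [mem_Icc] at hs
  have hTsN : N ≤ T s := hTN s hs.1
  have hge {a b j : ℤ} (ha : N ≤ a) (hj : j ∈ Ico a b) : N ≤ j := ha.trans (mem_Ico.1 hj).1
  have hfirst : c / 2 * x (T s) ≤ x n := by
    have := sum_mul_le_sub_of_le_sub (w := x ∘ T) (y := x (T s)) (by omega : n ≤ u + 1)
      (fun j hj => hP j (hge hNn hj))
      (fun j hj => hanti (hTN j (mem_Ico.1 hj).1) hTsN
        (hsmax j (mem_Icc.2 ⟨(mem_Ico.1 hj).1, by have := (mem_Ico.1 hj).2; omega⟩)))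
      (fun j hj => hle j (hge hNn hj))
    nlinarith [hx (u + 1) (by omega), hx (T s) hTsN]
  have hsecond : c / 2 * (l * x n) ≤ x (T s) := by
    have := sum_mul_le_sub_of_le_sub (w := x ∘ T) (y := l * x n) hTs
      (fun j hj => hP j (hge hTsN hj))
      (fun j hj => (mul_le_mul_of_nonneg_left
        (hanti (hge hTsN hj) hNn (mem_Ico.1 hj).2.le) hl).trans (hlxN j (hge hTsN hj)))
      (fun j hj => hle j (hge hTsN hj))
    nlinarith [mul_le_mul_of_nonneg_right hcs (mul_nonneg hl (hx n hNn).le), hx n hNn]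
  nlinarith [hx n hNn]

end IsEventuallyPosSubsolution

theorem not_isEventuallyPosSubsolution {P : ℤ → ℝ} {T : ℤ → ℤ} {x : ℤ → ℝ} {c : ℝ}
    (hc : 1 / exp 1 < c) (hsum : ∀ᶠ n in atTop, c ≤ ∑ j ∈ Ico (T n) n, P j) :
    ¬IsEventuallyPosSubsolution P T x := by
  intro h
  have hc0 : 0 < c := (one_div_pos.2 (exp_pos 1)).trans hc
  have hec : 1 < exp 1 * c := by rwa [div_lt_iff₀' (exp_pos 1)] at hc
  have hpow (k : ℕ) : ∀ᶠ n in atTop, (exp 1 * c) ^ k * x n ≤ x (T n) := by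
    induction k with
    | zero =>
      -- `exp_mul_le` with `l = 0`
      simpa using h.exp_mul_le hc0 hsum le_rfl (by simpa using h.pos_comp.mono fun _ => le_of_lt)
    | succ k ih =>
      filter_upwards [h.exp_mul_le hc0 hsum (by positivity) ih, h.pos] with n hn hxn
      calc (exp 1 * c) ^ (k + 1) * x n = exp 1 * (c * (exp 1 * c) ^ k) * x n := by ring
        _ ≤ exp (c * (exp 1 * c) ^ k) * x n :=
          mul_le_mul_of_nonneg_right exp_one_mul_le_exp hxn.le
        _ ≤ x (T n) := hn
  obtain ⟨k, hk⟩ := ((tendsto_pow_atTop_atTop_of_one_lt hec).eventually_gt_atTop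
    (1 / (c / 2) ^ 2)).exists
  have := h.mul_half_sq_le_one hc0 hsum (by positivity) (hpow k)
  rw [div_lt_iff₀ (by positivity)] at hk
  linarith

theorem exists_lt_eventually_le_of_lt_liminf {ι α : Type*} [Finite ι] {l : Filter α}
    {f : ι → α → ℝ} {a : ℝ} (hb : ∀ k, IsBoundedUnder (· ≥ ·) l (f k))
    (h : ∀ k, a < liminf (f k) l) : ∃ c, a < c ∧ ∀ᶠ n in l, ∀ k, c ≤ f k n := by
  obtain ⟨c, hac, hc⟩ := (eventually_all.2 fun k => eventually_lt_nhds (h k)).exists_gt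
  exact ⟨c, hac, eventually_all.2 fun k =>
    (eventually_lt_of_lt_liminf (hc k) (hb k)).mono fun _ => le_of_lt⟩

theorem isEventuallyPosSubsolution_of_eq {m : ℕ} {p : Fin m → ℤ → ℝ} {τ : Fin m → ℤ → ℤ}
    {x : ℤ → ℝ} {κ : ℤ → Fin m} (hp : ∀ i n, 0 ≤ n → 0 ≤ p i n)
    (hτ : ∀ i, Tendsto (τ i) atTop atTop) (hκ : ∀ n i, τ i n ≤ τ (κ n) n)
    (hxeq : ∀ n, 0 ≤ n → x (n + 1) - x n + ∑ i, p i n * x (τ i n) = 0)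
    (hx : ∀ᶠ n in atTop, 0 < x n) :
    IsEventuallyPosSubsolution (fun n => ∑ i, p i n) (fun n => τ (κ n) n) x := by
  have hτx : ∀ᶠ n in atTop, ∀ i, 0 < x (τ i n) := eventually_all.2 fun i => (hτ i).eventually hx
  have hanti : ∀ᶠ N in atTop, AntitoneOn x (Set.Ici N) :=
    eventually_antitoneOn_Ici <| by
      filter_upwards [eventually_ge_atTop 0, hτx] with n hn hxn
      have := hxeq n hn
      have : 0 ≤ ∑ i, p i n * x (τ i n) :=
        sum_nonneg fun i _ => mul_nonneg (hp i n hn) (hxn i).le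
      linarith
  obtain ⟨N, hN⟩ := hanti.exists
  refine ⟨?_, hx, tendsto_atTop_mono (fun n => hκ n (κ 0)) (hτ (κ 0)), ?_⟩
  · filter_upwards [eventually_ge_atTop 0] with n hn
    exact sum_nonneg fun i _ => hp i n hn
  · filter_upwards [eventually_ge_atTop 0,
      eventually_all.2 fun i => (hτ i).eventually_ge_atTop N] with n hn hτN
    have : ∑ i, p i n * x (τ (κ n) n) ≤ ∑ i, p i n * x (τ i n) :=
      sum_le_sum fun i _ => mul_le_mul_of_nonneg_left (hN (hτN i) (hτN (κ n)) (hκ n i)) (hp i n hn)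
    rw [← sum_mul] at this
    linarith [hxeq n hn]

theorem not_eventually_pos {m : ℕ} (hm : 0 < m) (p : Fin m → ℤ → ℝ) (τ : Fin m → ℤ → ℤ)
    (hp : ∀ i n, 0 ≤ n → 0 ≤ p i n) (hτlim : ∀ i, Tendsto (τ i) atTop atTop)
    (hcond : ∀ k, 1 / exp 1 < liminf (fun n => ∑ i, ∑ j ∈ Ico (τ k n) n, p i j) atTop)
    (x : ℤ → ℝ) (hxeq : ∀ n, 0 ≤ n → x (n + 1) - x n + ∑ i, p i n * x (τ i n) = 0) :
    ¬∀ᶠ n in atTop, 0 < x n := by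
  intro hx
  have : Nonempty (Fin m) := Fin.pos_iff_nonempty.1 hm
  choose κ hκ using fun n => Finite.exists_max fun i => τ i n
  have hb (k : Fin m) : IsBoundedUnder (· ≥ ·) atTop
      fun n => ∑ i, ∑ j ∈ Ico (τ k n) n, p i j :=
    isBoundedUnder_of_eventually_ge <| by
      filter_upwards [(hτlim k).eventually_ge_atTop 0] with n hn
      exact sum_nonneg fun i _ => sum_nonneg fun j hj => hp i j (hn.trans (mem_Ico.1 hj).1)
  obtain ⟨c, hc, hsum⟩ := exists_lt_eventually_le_of_lt_liminf hb hcond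
  refine not_isEventuallyPosSubsolution hc ?_ (isEventuallyPosSubsolution_of_eq hp hτlim hκ hxeq hx)
  filter_upwards [hsum] with n hn
  rw [sum_comm]
  exact hn (κ n)

theorem stmt_10_general {m : ℕ} (hm : 0 < m) (p : Fin m → ℤ → ℝ) (τ : Fin m → ℤ → ℤ)
    (hp : ∀ i : Fin m, ∀ n : ℤ, 0 ≤ n → 0 ≤ p i n)
    (hτlim : ∀ i : Fin m, Filter.Tendsto (τ i) Filter.atTop Filter.atTop)
    (hcond : ∀ k : Fin m,
      1 / Real.exp 1 <
        Filter.liminf (fun n : ℤ => ∑ i : Fin m, ∑ j ∈ Finset.Ico (τ k n) n, p i j)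
          Filter.atTop)
    (x : ℤ → ℝ)
    (hxeq : ∀ n : ℤ, 0 ≤ n → x (n + 1) - x n + ∑ i : Fin m, p i n * x (τ i n) = 0) :
    (¬ ∃ N : ℤ, ∀ n ≥ N, 0 < x n) ∧ (¬ ∃ N : ℤ, ∀ n ≥ N, x n < 0) := by
  have hneg : ∀ n, 0 ≤ n → -x (n + 1) - -x n + ∑ i, p i n * -x (τ i n) = 0 := fun n hn => by
    simp only [mul_neg, sum_neg_distrib]
    linarith [hxeq n hn]
  refine ⟨fun hpos => not_eventually_pos hm p τ hp hτlim hcond x hxeq (eventually_atTop.2 hpos),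
    fun ⟨N, hN⟩ => not_eventually_pos hm p τ hp hτlim hcond (-x) hneg ?_⟩
  exact eventually_atTop.2 ⟨N, fun n hn => neg_pos.2 (hN n hn)⟩

/-- Theorem 3.4: if `τ_i(n) → ∞` and for each `k`,
`liminf_{n→∞} ∑_{i=1}^m ∑_{j=τ_k(n)}^{n-1} p_i(j) > 1/e`,
then every solution of the retarded equation oscillates. -/
theorem stmt_10 {m : ℕ} (hm : 0 < m) (p : Fin m → ℤ → ℝ) (τ : Fin m → ℤ → ℤ)
    (hp : ∀ i : Fin m, ∀ n : ℤ, 0 ≤ n → 0 ≤ p i n)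
    (hτ : ∀ i : Fin m, ∀ n : ℤ, 0 ≤ n → τ i n ≤ n - 1)
    (hτlim : ∀ i : Fin m, Filter.Tendsto (τ i) Filter.atTop Filter.atTop)
    (hcond : ∀ k : Fin m,
      1 / Real.exp 1 <
        Filter.liminf (fun n : ℤ => ∑ i : Fin m, ∑ j ∈ Finset.Ico (τ k n) n, p i j)
          Filter.atTop)
    (x : ℤ → ℝ)
    (hxeq : ∀ n : ℤ, 0 ≤ n → x (n + 1) - x n + ∑ i : Fin m, p i n * x (τ i n) = 0) :
    (¬ ∃ N : ℤ, ∀ n ≥ N, 0 < x n) ∧ (¬ ∃ N : ℤ, ∀ n ≥ N, x n < 0) :=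
  stmt_10_general hm p τ hp hτlim hcond x hxeq
end

section
/- Assume that for each 1 ≤ i ≤ m there exists a positive integer μ_i such that σ_i(n) − n ≤ μ_i for all n ≥ 1, and that for each k = 1, …, m, liminf_{n→∞} Σ_{i=1}^m Σ_{j=n+1}^{σ_k(n)} p_i(j) > (μ_k/(μ_k+1))^{μ_k+1}. Then every solution of (E_A) oscillates. -/
/-!
If `x` were eventually positive, the equation would make it eventually nondecreasing, so
`ρ * x n ≤ x (σ i n)` would hold eventually with `ρ = 1`. Any such bound gives
`x (t - 1) ≤ (1 - ρ P t) * x t` with `P t = ∑ i, p i t`. Telescoping this over the window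
`(n, σ k n]`, which has at most `μ k` points, and applying AM-GM to the `μ k + 1` numbers `ρ A` and
`1 - ρ P t` (padded with ones), where `A` is the window sum, yields
`ρ A x n ≤ (μ k / (μ k + 1)) ^ (μ k + 1) * x (σ k n)`. Eventually `A` exceeds `q` times that
constant for a fixed `q > 1`, so the bound improves from `ρ` to `q ρ`. Iterating makes `x (σ i n) / x n`
unbounded, which is absurd. Eventually negative solutions are handled by passing to `-x`.
-/


open Filter Finset Topology

theorem prod_le_arith_mean_pow_card {ι : Type*} {s : Finset ι} {f : ι → ℝ}
    (hf : ∀ i ∈ s, 0 ≤ f i) : ∏ i ∈ s, f i ≤ ((∑ i ∈ s, f i) / #s) ^ #s := by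
  rcases s.eq_empty_or_nonempty with rfl | hs
  · simp
  have hcard : (#s : ℝ) ≠ 0 := by exact_mod_cast hs.card_pos.ne'
  have hamgm := Real.geom_mean_le_arith_mean_weighted s (fun _ => (#s : ℝ)⁻¹) f
    (fun _ _ => by positivity) (by rw [sum_const, nsmul_eq_mul, mul_inv_cancel₀ hcard]) hf
  calc ∏ i ∈ s, f i = (∏ i ∈ s, f i ^ (#s : ℝ)⁻¹) ^ #s := by
        rw [← prod_pow]
        exact prod_congr rfl fun i hi =>
          (Real.rpow_inv_natCast_pow (hf i hi) hs.card_pos.ne').symm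
    _ ≤ (∑ i ∈ s, (#s : ℝ)⁻¹ * f i) ^ #s :=
        pow_le_pow_left₀ (prod_nonneg fun i hi => Real.rpow_nonneg (hf i hi) _) hamgm _
    _ = ((∑ i ∈ s, f i) / #s) ^ #s := by rw [← mul_sum, inv_mul_eq_div]

theorem sum_mul_prod_one_sub_le {ι : Type*} [DecidableEq ι] {s t : Finset ι} {a : ι → ℝ}
    (hst : s ⊆ t) (ha₀ : ∀ i ∈ s, 0 ≤ a i) (ha₁ : ∀ i ∈ s, a i ≤ 1) :
    (∑ i ∈ s, a i) * ∏ i ∈ s, (1 - a i) ≤ ((#t : ℝ) / (#t + 1)) ^ (#t + 1) := by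
  set S := ∑ i ∈ s, a i
  set b : ι → ℝ := fun i => 1 - if i ∈ s then a i else 0
  have hprod : ∏ i ∈ t, b i = ∏ i ∈ s, (1 - a i) := by
    rw [← prod_subset hst fun i _ hi => by simp [b, hi]]
    exact prod_congr rfl fun i hi => by simp [b, hi]
  have hsum : ∑ i ∈ t, b i = #t - S := by
    rw [sum_sub_distrib, sum_ite_mem, inter_eq_right.2 hst, sum_const, nsmul_one]
  have hb : ∀ i ∈ t, 0 ≤ b i := fun i _ => by
    by_cases hi : i ∈ s <;> simp [b, hi, ha₁ i]
  -- AM-GM for the `#t + 1` numbers `S` and `b i`, whose sum is `#t`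
  have hamgm := prod_le_arith_mean_pow_card (s := insertNone t) (f := fun o => o.elim S b)
    (forall_mem_insertNone.2 ⟨sum_nonneg ha₀, hb⟩)
  simp only [prod_insertNone, sum_insertNone, card_insertNone, Option.elim, hprod, hsum,
    add_sub_cancel] at hamgm
  exact_mod_cast hamgm

theorem exists_one_lt_forall_mul_lt {ι : Type*} [Finite ι] {c L : ι → ℝ} (h : ∀ i, c i < L i) :
    ∃ q > 1, ∀ i, q * c i < L i := by
  have hnear : ∀ᶠ q in 𝓝 (1 : ℝ), ∀ i, q * c i < L i :=
    eventually_all.2 fun i =>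
      (tendsto_id.mul_const (c i)).eventually_lt_const (by rw [one_mul]; exact h i)
  obtain ⟨q, hq, hq1⟩ := ((hnear.filter_mono nhdsWithin_le_nhds).and
    (self_mem_nhdsWithin (s := Set.Ioi 1))).exists
  exact ⟨q, hq1, hq⟩

theorem le_prod_Icc_mul_of_le_mul {x f : ℕ → ℝ} {n s : ℕ} (hns : n ≤ s)
    (hf : ∀ t ∈ Icc (n + 1) s, 0 ≤ f t) (h : ∀ t ∈ Icc (n + 1) s, x (t - 1) ≤ f t * x t) :
    x n ≤ (∏ t ∈ Icc (n + 1) s, f t) * x s := by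
  induction s, hns using Nat.le_induction with
  | base => simp
  | succ s hns ih =>
    have hsub : Icc (n + 1) s ⊆ Icc (n + 1) (s + 1) := Icc_subset_Icc_right s.le_succ
    have htop : s + 1 ∈ Icc (n + 1) (s + 1) := mem_Icc.2 ⟨by omega, le_rfl⟩
    calc x n ≤ (∏ t ∈ Icc (n + 1) s, f t) * x s :=
          ih (fun t ht => hf t (hsub ht)) fun t ht => h t (hsub ht)
      _ ≤ (∏ t ∈ Icc (n + 1) s, f t) * (f (s + 1) * x (s + 1)) :=
          mul_le_mul_of_nonneg_left (h _ htop) (prod_nonneg fun t ht => hf t (hsub ht))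
      _ = (∏ t ∈ Icc (n + 1) (s + 1), f t) * x (s + 1) := by
          rw [prod_Icc_succ_top (by omega), mul_assoc]

section AdvancedEquation

variable {ι : Type*} [Fintype ι] {p : ι → ℕ → ℝ} {σ : ι → ℕ → ℕ} {x : ℕ → ℝ}

def IsAdvancedSolution (p : ι → ℕ → ℝ) (σ : ι → ℕ → ℕ) (x : ℕ → ℝ) : Prop :=
  ∀ n, 1 ≤ n → x n - x (n - 1) = ∑ i, p i n * x (σ i n)

theorem IsAdvancedSolution.neg (hx : IsAdvancedSolution p σ x) : IsAdvancedSolution p σ (-x) :=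
  fun n hn => by simp only [Pi.neg_apply, mul_neg, sum_neg_distrib, ← hx n hn]; ring

namespace IsAdvancedSolution

variable (hx : IsAdvancedSolution p σ x) (hp : ∀ i n, 0 ≤ p i n) {N : ℕ}
  (hpos : ∀ n ≥ N, 0 < x n)
include hx hp hpos

theorem le_comp_of_pos (hσ : ∀ i n, 1 ≤ n → n + 1 ≤ σ i n) {n : ℕ} (hn : N < n) (i : ι) :
    x n ≤ x (σ i n) := by
  have hmono : MonotoneOn x (Set.Ici N) := monotoneOn_nat_Ici_of_le_succ fun t ht => by
    have hdiff := hx (t + 1) (by omega)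
    rw [Nat.add_sub_cancel] at hdiff
    have hrhs : 0 ≤ ∑ i, p i (t + 1) * x (σ i (t + 1)) := sum_nonneg fun i _ =>
      mul_nonneg (hp i _) (hpos _ (by have := hσ i (t + 1) (by omega); omega)).le
    linarith
  have hnσ := hσ i n (by omega)
  exact hmono (Set.mem_Ici.2 hn.le) (Set.mem_Ici.2 (by omega)) (by omega)

theorem sub_one_le_mul_of_le_comp {t : ℕ} (ht : N < t) {ρ : ℝ}
    (hρ : ∀ i, ρ * x t ≤ x (σ i t)) :
    ρ * ∑ i, p i t < 1 ∧ x (t - 1) ≤ (1 - ρ * ∑ i, p i t) * x t := by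
  have hlow : ρ * (∑ i, p i t) * x t ≤ ∑ i, p i t * x (σ i t) := by
    rw [mul_comm ρ, sum_mul, sum_mul]
    exact sum_le_sum fun i _ => by
      rw [mul_assoc]; exact mul_le_mul_of_nonneg_left (hρ i) (hp i t)
  have hle : x (t - 1) ≤ (1 - ρ * ∑ i, p i t) * x t := by
    have := hx t (by omega); linarith
  refine ⟨?_, hle⟩
  have h0 : 0 < (1 - ρ * ∑ i, p i t) * x t := (hpos _ (by omega)).trans_le hle
  linarith [pos_of_mul_pos_left h0 (hpos t ht.le).le]

theorem mul_window_sum_le {n : ℕ} (hn : N < n) {k : ι} (hnσ : n ≤ σ k n) {μ : ℕ}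
    (hμ : σ k n - n ≤ μ) {ρ : ℝ} (hρ₀ : 0 ≤ ρ) (hρ : ∀ t > n, ∀ i, ρ * x t ≤ x (σ i t)) :
    ρ * (∑ i, ∑ j ∈ Icc (n + 1) (σ k n), p i j) * x n ≤
      ((μ : ℝ) / (μ + 1)) ^ (μ + 1) * x (σ k n) := by
  set s := Icc (n + 1) (σ k n)
  have hstep : ∀ t ∈ s, ρ * ∑ i, p i t < 1 ∧ x (t - 1) ≤ (1 - ρ * ∑ i, p i t) * x t :=
    fun t ht => hx.sub_one_le_mul_of_le_comp hp hpos (by have := (mem_Icc.1 ht).1; omega)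
      (hρ t (mem_Icc.1 ht).1)
  have htel := le_prod_Icc_mul_of_le_mul hnσ
    (fun t ht => sub_nonneg.2 (hstep t ht).1.le) fun t ht => (hstep t ht).2
  have hamgm := sum_mul_prod_one_sub_le (a := fun t => ρ * ∑ i, p i t)
    (Icc_subset_Icc_right (show σ k n ≤ n + μ by omega))
    (fun t _ => mul_nonneg hρ₀ (sum_nonneg fun i _ => hp i t)) fun t ht => (hstep t ht).1.le
  rw [Nat.card_Icc, show n + μ + 1 - (n + 1) = μ by omega, ← mul_sum, sum_comm] at hamgm
  have hA : 0 ≤ ρ * ∑ i, ∑ j ∈ s, p i j :=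
    mul_nonneg hρ₀ (sum_nonneg fun i _ => sum_nonneg fun j _ => hp i j)
  calc ρ * (∑ i, ∑ j ∈ s, p i j) * x n
      ≤ ρ * (∑ i, ∑ j ∈ s, p i j) * ((∏ t ∈ s, (1 - ρ * ∑ i, p i t)) * x (σ k n)) :=
        mul_le_mul_of_nonneg_left htel hA
    _ = (ρ * (∑ i, ∑ j ∈ s, p i j) * ∏ t ∈ s, (1 - ρ * ∑ i, p i t)) * x (σ k n) := by ring
    _ ≤ ((μ : ℝ) / (μ + 1)) ^ (μ + 1) * x (σ k n) :=
        mul_le_mul_of_nonneg_right hamgm (hpos _ (by omega)).le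

end IsAdvancedSolution

theorem IsAdvancedSolution.not_eventually_pos [Nonempty ι] (hx : IsAdvancedSolution p σ x)
    (hp : ∀ i n, 0 ≤ p i n) (hσ : ∀ i n, 1 ≤ n → n + 1 ≤ σ i n) {μ : ι → ℕ}
    (hμ : ∀ i n, 1 ≤ n → σ i n - n ≤ μ i)
    (hcond : ∀ k, ((μ k : ℝ) / (μ k + 1)) ^ (μ k + 1) <
      liminf (fun n => ∑ i, ∑ j ∈ Icc (n + 1) (σ k n), p i j) atTop) :
    ¬ ∀ᶠ n in atTop, 0 < x n := by
  intro hev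
  obtain ⟨N, hpos⟩ := eventually_atTop.1 hev
  set c : ι → ℝ := fun k => ((μ k : ℝ) / (μ k + 1)) ^ (μ k + 1)
  have hc : ∀ k, 0 < c k := fun k => by
    have : 0 < μ k := by have := hσ k 1 le_rfl; have := hμ k 1 le_rfl; omega
    positivity
  obtain ⟨q, hq1, hq⟩ := exists_one_lt_forall_mul_lt hcond
  obtain ⟨W, hW⟩ := eventually_atTop.1 <| eventually_all.2 fun k =>
    eventually_lt_of_lt_liminf (hq k) <| isBoundedUnder_of
      ⟨0, fun n => sum_nonneg fun i _ => sum_nonneg fun j _ => hp i j⟩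
  set M := max (N + 1) W
  have hgrowth : ∀ r : ℕ, ∀ n ≥ M, ∀ i, q ^ r * x n ≤ x (σ i n) := by
    intro r
    induction r with
    | zero =>
      intro n hn i
      simpa using hx.le_comp_of_pos hp hpos hσ (show N < n by omega) i
    | succ r ih =>
      intro n hn k
      have hwin := hx.mul_window_sum_le hp hpos (by omega)
        (Nat.le_of_succ_le (hσ k n (by omega))) (hμ k n (by omega)) (by positivity)
        fun t ht => ih t (by omega)
      refine le_of_mul_le_mul_left ?_ (hc k)
      calc c k * (q ^ (r + 1) * x n) = q ^ r * (q * c k) * x n := by ring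
        _ ≤ q ^ r * (∑ i, ∑ j ∈ Icc (n + 1) (σ k n), p i j) * x n := by
          gcongr
          exacts [(hpos n (by omega)).le, (hW n (by omega) k).le]
        _ ≤ c k * x (σ k n) := hwin
  obtain ⟨i⟩ := ‹Nonempty ι›
  have hxM : 0 < x M := hpos M (by omega)
  obtain ⟨r, hr⟩ := pow_unbounded_of_one_lt (x (σ i M) / x M) hq1
  rw [div_lt_iff₀ hxM] at hr
  linarith [hgrowth r M le_rfl i]

end AdvancedEquation

theorem stmt_11_general {m : ℕ} (hm : 0 < m) (p : Fin m → ℕ → ℝ) (σ : Fin m → ℕ → ℕ)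
    (hp : ∀ i : Fin m, ∀ n : ℕ, 0 ≤ p i n)
    (hσ : ∀ i : Fin m, ∀ n : ℕ, 1 ≤ n → n + 1 ≤ σ i n)
    (μ : Fin m → ℕ)
    (hμ : ∀ i : Fin m, ∀ n : ℕ, 1 ≤ n → σ i n - n ≤ μ i)
    (hcond : ∀ k : Fin m,
      ((μ k : ℝ) / (μ k + 1)) ^ (μ k + 1) <
        Filter.liminf (fun n : ℕ => ∑ i : Fin m, ∑ j ∈ Finset.Icc (n + 1) (σ k n), p i j)
          Filter.atTop)
    (x : ℕ → ℝ)
    (hxeq : ∀ n : ℕ, 1 ≤ n → x n - x (n - 1) - ∑ i : Fin m, p i n * x (σ i n) = 0) :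
    (¬ ∃ N : ℕ, ∀ n ≥ N, 0 < x n) ∧ (¬ ∃ N : ℕ, ∀ n ≥ N, x n < 0) := by
  have : Nonempty (Fin m) := ⟨⟨0, hm⟩⟩
  have hx : IsAdvancedSolution p σ x := fun n hn => sub_eq_zero.1 (hxeq n hn)
  refine ⟨fun hpos => hx.not_eventually_pos hp hσ hμ hcond (eventually_atTop.2 hpos),
    fun ⟨N, hneg⟩ => hx.neg.not_eventually_pos hp hσ hμ hcond ?_⟩
  exact eventually_atTop.2 ⟨N, fun n hn => neg_pos.2 (hneg n hn)⟩

/-- Theorem 3.3′: if each advance is bounded, `σ_i(n) - n ≤ μ_i` with `μ_i` a positive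
integer, and for each `k`, `liminf_{n→∞} ∑_{i=1}^m ∑_{j=n+1}^{σ_k(n)} p_i(j) >
(μ_k/(μ_k+1))^{μ_k+1}`, then every solution of the advanced equation oscillates. -/
theorem stmt_11 {m : ℕ} (hm : 0 < m) (p : Fin m → ℕ → ℝ) (σ : Fin m → ℕ → ℕ)
    (hp : ∀ i : Fin m, ∀ n : ℕ, 0 ≤ p i n)
    (hσ : ∀ i : Fin m, ∀ n : ℕ, 1 ≤ n → n + 1 ≤ σ i n)
    (μ : Fin m → ℕ) (hμpos : ∀ i : Fin m, 0 < μ i)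
    (hμ : ∀ i : Fin m, ∀ n : ℕ, 1 ≤ n → σ i n - n ≤ μ i)
    (hcond : ∀ k : Fin m,
      ((μ k : ℝ) / (μ k + 1)) ^ (μ k + 1) <
        Filter.liminf (fun n : ℕ => ∑ i : Fin m, ∑ j ∈ Finset.Icc (n + 1) (σ k n), p i j)
          Filter.atTop)
    (x : ℕ → ℝ)
    (hxeq : ∀ n : ℕ, 1 ≤ n → x n - x (n - 1) - ∑ i : Fin m, p i n * x (σ i n) = 0) :
    (¬ ∃ N : ℕ, ∀ n ≥ N, 0 < x n) ∧ (¬ ∃ N : ℕ, ∀ n ≥ N, x n < 0) :=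
  stmt_11_general hm p σ hp hσ μ hμ hcond x hxeq
end
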